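/- arXiv:1211.0665 — 5 statements merged into one kernel-verified Lean document; each statement's English description precedes it below -/
import Mathlib

section
/- Let Φ be an n×N complex matrix with unit column vectors that satisfies the RIP of order m with parameter ε, where m ≥ 2. Then for every k ≥ m, Φ satisfies the RIP of order k with parameter δ = ε(k-1)/(m-1). -/
/-!
Write `φⱼ` for the columns of `Φ`. Since they are unit vectors,
`‖Φx‖² - ‖x‖² = ∑_{i ≠ j} Re ⟪xᵢ φᵢ, xⱼ φⱼ⟫`, so the RIP of order `m` says exactly that this
off-diagonal sum, restricted to any index set `S` with `#S ≤ m`, is at most `ε ∑_{i ∈ S} |xᵢ|²` in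
absolute value. For `x` supported on `T` with `t = #T > m`, sum these bounds over all `m`-subsets
of `T`: every off-diagonal pair lies in `C(t-2, m-2)` of them and every index in `C(t-1, m-1)`, and
`C(t-1, m-1) / C(t-2, m-2) = (t-1)/(m-1) ≤ (k-1)/(m-1)`.
-/

open Finset

/-- `Φ` satisfies the Restricted Isometry Property of order `k` with parameter `δ`. -/
def RIP {m N : Type*} [Fintype m] [Fintype N] [DecidableEq N]
    (Φ : Matrix m N ℂ) (k : ℕ) (δ : ℝ) : Prop :=
  ∀ x : N → ℂ, (Finset.univ.filter fun i => x i ≠ 0).card ≤ k →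
    (1 - δ) * ∑ i, ‖x i‖ ^ 2 ≤ ∑ a, ‖Φ.mulVec x a‖ ^ 2 ∧
      ∑ a, ‖Φ.mulVec x a‖ ^ 2 ≤ (1 + δ) * ∑ i, ‖x i‖ ^ 2

namespace Finset

variable {α β M : Type*} [DecidableEq α]

theorem card_filter_powersetCard_superset {U T : Finset α} (hUT : U ⊆ T) {m : ℕ}
    (hUm : #U ≤ m) :
    #{S ∈ T.powersetCard m | U ⊆ S} = (#T - #U).choose (m - #U) := by
  rw [← card_sdiff_of_subset hUT, ← card_powersetCard]
  refine card_nbij' (· \ U) (· ∪ U) ?_ ?_ ?_ ?_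
  · intro S hS
    simp only [coe_filter, mem_powersetCard, Set.mem_ofPred_eq, mem_coe] at hS ⊢
    obtain ⟨⟨hST, hcard⟩, hUS⟩ := hS
    exact ⟨sdiff_subset_sdiff hST le_rfl, by rw [card_sdiff_of_subset hUS, hcard]⟩
  · intro S hS
    simp only [coe_filter, mem_powersetCard, Set.mem_ofPred_eq, mem_coe, subset_sdiff] at hS ⊢
    obtain ⟨⟨hST, hdisj⟩, hcard⟩ := hS
    refine ⟨⟨union_subset hST hUT, ?_⟩, subset_union_right⟩
    rw [card_union_of_disjoint hdisj, hcard]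
    omega
  · intro S hS
    exact sdiff_union_of_subset (mem_filter.1 hS).2
  · intro S hS
    simp only [mem_coe, mem_powersetCard, subset_sdiff] at hS
    exact union_sdiff_cancel_right hS.1.2

theorem sum_powersetCard_sum_eq_choose_nsmul [AddCommMonoid M] (T : Finset α) {m r : ℕ}
    (F : Finset α → Finset β) (U : β → Finset α) (hF : ∀ S ⊆ T, ∀ b, b ∈ F S ↔ b ∈ F T ∧ U b ⊆ S)
    (hU : ∀ b ∈ F T, #(U b) = r) (hrm : r ≤ m) (f : β → M) :
    ∑ S ∈ T.powersetCard m, ∑ b ∈ F S, f b = (#T - r).choose (m - r) • ∑ b ∈ F T, f b := by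
  rw [sum_comm' (t' := F T) (s' := fun b => {S ∈ T.powersetCard m | U b ⊆ S}), smul_sum]
  · refine sum_congr rfl fun b hb => ?_
    have hUT : U b ⊆ T := ((hF T subset_rfl b).1 hb).2
    rw [sum_const, card_filter_powersetCard_superset hUT (hU b hb ▸ hrm), hU b hb]
  · intro S b
    rw [mem_filter, mem_powersetCard]
    constructor
    · rintro ⟨⟨hST, hS⟩, hb⟩
      exact ⟨⟨⟨hST, hS⟩, ((hF S hST b).1 hb).2⟩, ((hF S hST b).1 hb).1⟩
    · rintro ⟨⟨⟨hST, hS⟩, hUS⟩, hb⟩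
      exact ⟨⟨hST, hS⟩, (hF S hST b).2 ⟨hb, hUS⟩⟩

theorem mul_abs_sum_offDiag_le_of_forall_powersetCard {T : Finset α} {m : ℕ} (hm : 2 ≤ m)
    (hmT : m ≤ #T) (f : α × α → ℝ) (g : α → ℝ) {ε : ℝ}
    (h : ∀ S ∈ T.powersetCard m, |∑ p ∈ S.offDiag, f p| ≤ ε * ∑ i ∈ S, g i) :
    ((m : ℝ) - 1) * |∑ p ∈ T.offDiag, f p| ≤ ε * ((#T : ℝ) - 1) * ∑ i ∈ T, g i := by
  set c₂ : ℝ := (((#T - 2).choose (m - 2) : ℕ) : ℝ)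
  set c₁ : ℝ := (((#T - 1).choose (m - 1) : ℕ) : ℝ)
  have hc₂ : 0 < c₂ := by unfold c₂; exact_mod_cast Nat.choose_pos (by omega)
  have hpairs := sum_powersetCard_sum_eq_choose_nsmul T offDiag (fun p => {p.1, p.2})
    (fun S hST p => by simp only [mem_offDiag, insert_subset_iff, singleton_subset_iff]; grind)
    (fun p hp => card_pair (mem_offDiag.1 hp).2.2) hm f
  have hsingles := sum_powersetCard_sum_eq_choose_nsmul T (fun S => S) singleton
    (fun S hST i => by simp only [singleton_subset_iff]; grind) (by simp) (by omega : 1 ≤ m) g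
  have hchoose : ((#T : ℝ) - 1) * c₂ = c₁ * ((m : ℝ) - 1) := by
    have := Nat.add_one_mul_choose_eq (#T - 2) (m - 2)
    rw [show #T - 2 + 1 = #T - 1 by omega, show m - 2 + 1 = m - 1 by omega] at this
    unfold c₁ c₂
    rw [← Nat.cast_pred (by omega), ← Nat.cast_pred (by omega)]
    exact_mod_cast this
  have havg : c₂ * |∑ p ∈ T.offDiag, f p| ≤ ε * (c₁ * ∑ i ∈ T, g i) :=
    calc c₂ * |∑ p ∈ T.offDiag, f p|
        = |∑ S ∈ T.powersetCard m, ∑ p ∈ S.offDiag, f p| := by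
          rw [hpairs, nsmul_eq_mul, abs_mul, abs_of_pos hc₂]
      _ ≤ ∑ S ∈ T.powersetCard m, ε * ∑ i ∈ S, g i :=
          (abs_sum_le_sum_abs _ _).trans (sum_le_sum h)
      _ = ε * (c₁ * ∑ i ∈ T, g i) := by
          rw [← mul_sum, hsingles, nsmul_eq_mul]
  refine le_of_mul_le_mul_left ?_ hc₂
  have hm1 : (0 : ℝ) ≤ (m : ℝ) - 1 := by
    have : (2 : ℝ) ≤ m := by exact_mod_cast hm
    linarith
  calc c₂ * (((m : ℝ) - 1) * |∑ p ∈ T.offDiag, f p|)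
      = ((m : ℝ) - 1) * (c₂ * |∑ p ∈ T.offDiag, f p|) := by ring
    _ ≤ ((m : ℝ) - 1) * (ε * (c₁ * ∑ i ∈ T, g i)) := mul_le_mul_of_nonneg_left havg hm1
    _ = c₂ * (ε * ((#T : ℝ) - 1) * ∑ i ∈ T, g i) := by
        linear_combination (-ε * ∑ i ∈ T, g i) * hchoose

end Finset

theorem norm_sum_sq_eq_sum_norm_sq_add_sum_offDiag {𝕜 E ι : Type*} [RCLike 𝕜]
    [NormedAddCommGroup E] [InnerProductSpace 𝕜 E] [DecidableEq ι] (s : Finset ι) (v : ι → E) :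
    ‖∑ i ∈ s, v i‖ ^ 2
      = ∑ i ∈ s, ‖v i‖ ^ 2 + ∑ p ∈ s.offDiag, RCLike.re (inner 𝕜 (v p.1) (v p.2)) := by
  rw [← inner_self_eq_norm_sq (𝕜 := 𝕜), sum_inner, map_sum]
  simp_rw [inner_sum, map_sum]
  rw [← sum_product' (f := fun i j => RCLike.re (inner 𝕜 (v i) (v j))), ← diag_union_offDiag,
    sum_union (disjoint_diag_offDiag s), sum_diag]
  simp_rw [inner_self_eq_norm_sq]

open Matrix

section RIP

variable {ι κ : Type*} [Fintype κ]

theorem sum_norm_sq_eq_sum_norm_sq_of_support {x : κ → ℂ} {S : Finset κ}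
    (hx : ∀ j ∉ S, x j = 0) : ∑ i, ‖x i‖ ^ 2 = ∑ i ∈ S, ‖x i‖ ^ 2 :=
  (sum_subset (subset_univ S) fun i _ hi => by simp [hx i hi]).symm

theorem toLp_mulVec_eq_sum (Φ : Matrix ι κ ℂ) {x : κ → ℂ} {S : Finset κ}
    (hx : ∀ j ∉ S, x j = 0) :
    (WithLp.toLp 2 (Φ *ᵥ x) : EuclideanSpace ℂ ι) = ∑ j ∈ S, WithLp.toLp 2 (x j • Φᵀ j) := by
  rw [← WithLp.toLp_sum, mulVec_eq_sum,
    sum_subset (subset_univ S) fun j _ hj => by simp [hx j hj]]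
  simp only [op_smul_eq_smul]

variable [Fintype ι] [DecidableEq κ]

theorem rip_iff_abs_sub_le (Φ : Matrix ι κ ℂ) (k : ℕ) (δ : ℝ) :
    RIP Φ k δ ↔ ∀ x : κ → ℂ, #{i | x i ≠ 0} ≤ k →
      |∑ a, ‖(Φ *ᵥ x) a‖ ^ 2 - ∑ i, ‖x i‖ ^ 2| ≤ δ * ∑ i, ‖x i‖ ^ 2 := by
  refine forall_congr' fun x => imp_congr_right fun _ => ?_
  rw [abs_sub_le_iff]
  constructor <;> rintro ⟨h₁, h₂⟩ <;> constructor <;> linarith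

noncomputable def offDiagGramForm (Φ : Matrix ι κ ℂ) (S : Finset κ) (x : κ → ℂ) : ℝ :=
  ∑ p ∈ S.offDiag, RCLike.re (inner ℂ (WithLp.toLp 2 (x p.1 • Φᵀ p.1) : EuclideanSpace ℂ ι)
    (WithLp.toLp 2 (x p.2 • Φᵀ p.2)))

theorem sum_norm_mulVec_sq_sub_sum_norm_sq {Φ : Matrix ι κ ℂ}
    (hunit : ∀ j, ∑ a, ‖Φ a j‖ ^ 2 = 1) {x : κ → ℂ} {S : Finset κ} (hx : ∀ j ∉ S, x j = 0) :
    ∑ a, ‖(Φ *ᵥ x) a‖ ^ 2 - ∑ i, ‖x i‖ ^ 2 = offDiagGramForm Φ S x := by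
  have hcol (j : κ) : ‖(WithLp.toLp 2 (x j • Φᵀ j) : EuclideanSpace ℂ ι)‖ ^ 2 = ‖x j‖ ^ 2 := by
    rw [WithLp.toLp_smul, norm_smul, mul_pow, EuclideanSpace.norm_sq_eq]
    simp [hunit]
  rw [← EuclideanSpace.norm_sq_eq (WithLp.toLp 2 (Φ *ᵥ x)), toLp_mulVec_eq_sum Φ hx,
    norm_sum_sq_eq_sum_norm_sq_add_sum_offDiag (𝕜 := ℂ), sum_norm_sq_eq_sum_norm_sq_of_support hx]
  simp only [hcol, add_sub_cancel_left, offDiagGramForm]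

variable {Φ : Matrix ι κ ℂ} {m : ℕ} {ε : ℝ}

theorem RIP.abs_offDiagGramForm_le (hRIP : RIP Φ m ε) (hunit : ∀ j, ∑ a, ‖Φ a j‖ ^ 2 = 1)
    (x : κ → ℂ) {S : Finset κ} (hS : #S ≤ m) :
    |offDiagGramForm Φ S x| ≤ ε * ∑ i ∈ S, ‖x i‖ ^ 2 := by
  set y := S.piecewise x 0
  have hy : ∀ j ∉ S, y j = 0 := fun j hj => by simp [y, hj]
  have hsupp : #{i | y i ≠ 0} ≤ m :=
    (card_le_card fun i hi => by by_contra h; exact (mem_filter.1 hi).2 (hy i h)).trans hS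
  have h := (rip_iff_abs_sub_le Φ m ε).1 hRIP y hsupp
  rw [sum_norm_mulVec_sq_sub_sum_norm_sq hunit hy, sum_norm_sq_eq_sum_norm_sq_of_support hy] at h
  convert h using 2
  · refine sum_congr rfl fun p hp => ?_
    obtain ⟨h₁, h₂, -⟩ := mem_offDiag.1 hp
    simp [y, h₁, h₂]
  · refine sum_congr rfl fun i hi => ?_
    simp [y, hi]

theorem RIP.abs_offDiagGramForm_le_of_le (hRIP : RIP Φ m ε)
    (hunit : ∀ j, ∑ a, ‖Φ a j‖ ^ 2 = 1) (hm : 2 ≤ m) {k : ℕ} (hmk : m ≤ k) (x : κ → ℂ)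
    {T : Finset κ} (hT : #T ≤ k) :
    |offDiagGramForm Φ T x| ≤ ε * ((k : ℝ) - 1) / ((m : ℝ) - 1) * ∑ i ∈ T, ‖x i‖ ^ 2 := by
  have hm1 : (1 : ℝ) ≤ m - 1 := by
    have : (2 : ℝ) ≤ m := by exact_mod_cast hm
    linarith
  rw [div_mul_eq_mul_div, le_div_iff₀ (by linarith)]
  have hmk' : (m : ℝ) ≤ k := by exact_mod_cast hmk
  have hTk : (#T : ℝ) ≤ k := by exact_mod_cast hT
  -- `ε` may be negative a priori; in both cases the bound itself forces `ε * ∑ ‖xᵢ‖² ≥ 0`,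
  -- which is what replacing `#T - 1` or `m - 1` by `k - 1` needs.
  rcases le_or_gt #T m with hTm | hmT
  · have h := hRIP.abs_offDiagGramForm_le hunit x hTm
    have hεs : 0 ≤ ε * ∑ i ∈ T, ‖x i‖ ^ 2 := (abs_nonneg _).trans h
    nlinarith
  · have h : ((m : ℝ) - 1) * |offDiagGramForm Φ T x|
        ≤ ε * ((#T : ℝ) - 1) * ∑ i ∈ T, ‖x i‖ ^ 2 :=
      mul_abs_sum_offDiag_le_of_forall_powersetCard hm hmT.le _ _ fun S hS =>
        hRIP.abs_offDiagGramForm_le hunit x (mem_powersetCard.1 hS).2.le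
    have hT1 : (0 : ℝ) < #T - 1 := by
      have : (m : ℝ) < #T := by exact_mod_cast hmT
      linarith
    have hεs : 0 ≤ ε * ∑ i ∈ T, ‖x i‖ ^ 2 :=
      nonneg_of_mul_nonneg_right (by nlinarith [abs_nonneg (offDiagGramForm Φ T x)]) hT1
    nlinarith

end RIP

/-- If Φ has unit columns and satisfies the RIP of order m (m ≥ 2) with
parameter ε, then for every k ≥ m it satisfies the RIP of order k with parameter
δ = ε(k-1)/(m-1). -/
theorem rip_order_increase {n N m k : ℕ} (Φ : Matrix (Fin n) (Fin N) ℂ) (ε : ℝ)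
    (hunit : ∀ j, ∑ a, ‖Φ a j‖ ^ 2 = 1)
    (hm : 2 ≤ m) (hRIP : RIP Φ m ε) (hmk : m ≤ k) :
    RIP Φ k (ε * ((k : ℝ) - 1) / ((m : ℝ) - 1)) := by
  rw [rip_iff_abs_sub_le]
  intro x hx
  set T : Finset (Fin N) := {i | x i ≠ 0}
  have hxT : ∀ j ∉ T, x j = 0 := by simp [T]
  rw [sum_norm_mulVec_sq_sub_sum_norm_sq hunit hxT, sum_norm_sq_eq_sum_norm_sq_of_support hxT]
  exact hRIP.abs_offDiagGramForm_le_of_le hunit hm hmk x hx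
end

section
/- For a matrix Φ with unit column vectors u_1,...,u_N (N ≥ 2), the coherence parameter μ = max_{i≠j} |⟨u_i, u_j⟩| equals the smallest δ such that Φ satisfies the RIP of order 2 with parameter δ. -/
open Finset

/-!
Write `G = Φᴴ Φ` for the Gram matrix, so that `‖Φ x‖² = x* G x` with `G = 1 + E`, where `E`
has zero diagonal and off-diagonal entries of modulus at most `μ`. For `x` supported on at most
`k` coordinates, `|x* E x| ≤ μ ((∑ |xᵢ|)² - ∑ |xᵢ|²) ≤ (k - 1) μ ‖x‖²` by Cauchy–Schwarz, which
gives the RIP of order `k` with `δ = (k - 1) μ`. Conversely, if `|G i j| = μ` with `i ≠ j`,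
testing the RIP on `x = eᵢ + c eⱼ` with `c` the unimodular number making `c G i j = μ`
gives `‖Φ x‖² = 2 + 2μ ≤ 2 (1 + δ)`.
-/

open Matrix ComplexConjugate

lemma conjTranspose_mul_self_apply_self {m ι : Type*} [Fintype m] (Φ : Matrix m ι ℂ) (j : ι) :
    (Φᴴ * Φ) j j = ((∑ a, ‖Φ a j‖ ^ 2 : ℝ) : ℂ) := by
  simp [Matrix.mul_apply, Complex.conj_mul']

section

variable {m ι : Type*} [Fintype m] [Fintype ι]

lemma sum_norm_sq_eq_re_star_dotProduct (v : m → ℂ) :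
    ∑ a, ‖v a‖ ^ 2 = (star v ⬝ᵥ v).re := by
  simp [dotProduct, Complex.re_sum, Complex.conj_mul', ← Complex.ofReal_pow]

lemma sum_norm_sq_mulVec (Φ : Matrix m ι ℂ) (x : ι → ℂ) :
    ∑ a, ‖(Φ *ᵥ x) a‖ ^ 2 = (star x ⬝ᵥ (Φᴴ * Φ) *ᵥ x).re := by
  rw [sum_norm_sq_eq_re_star_dotProduct, star_mulVec, ← dotProduct_mulVec, mulVec_mulVec]

lemma sq_sum_norm_le_card_support_mul (x : ι → ℂ) :
    (∑ i, ‖x i‖) ^ 2 ≤ (univ.filter fun i => x i ≠ 0).card * ∑ i, ‖x i‖ ^ 2 := by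
  have hsupp : ∀ f : ℂ → ℝ, f 0 = 0 →
      ∑ i, f (x i) = ∑ i ∈ univ.filter fun i => x i ≠ 0, f (x i) := by
    intro f hf
    rw [Finset.sum_filter]
    exact Finset.sum_congr rfl fun i _ => by split_ifs with h <;> simp_all
  rw [hsupp (‖·‖) norm_zero, hsupp (‖·‖ ^ 2) (by simp)]
  exact sq_sum_le_card_mul_sum_sq

lemma norm_star_dotProduct_mulVec_le {E : Matrix ι ι ℂ} {μ : ℝ} (hdiag : ∀ i, E i i = 0)
    (hoff : ∀ i j, i ≠ j → ‖E i j‖ ≤ μ) (x : ι → ℂ) :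
    ‖star x ⬝ᵥ E *ᵥ x‖ ≤ μ * ((∑ i, ‖x i‖) ^ 2 - ∑ i, ‖x i‖ ^ 2) := by
  classical
  have hentry : ∀ i j, ‖E i j‖ ≤ μ - if i = j then μ else 0 := by
    intro i j
    split_ifs with h
    · simp [h, hdiag]
    · simpa using hoff i j h
  calc ‖star x ⬝ᵥ E *ᵥ x‖ ≤ ∑ i, ‖x i‖ * ∑ j, ‖E i j‖ * ‖x j‖ := by
        refine (norm_sum_le _ _).trans (Finset.sum_le_sum fun i _ => ?_)
        rw [Pi.star_apply, norm_mul, norm_star]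
        gcongr
        exact (norm_sum_le _ _).trans_eq (Finset.sum_congr rfl fun j _ => norm_mul _ _)
    _ ≤ ∑ i, ‖x i‖ * ∑ j, (μ - if i = j then μ else 0) * ‖x j‖ := by
        gcongr with i _ j _
        exact hentry i j
    _ = ∑ i, (μ * (∑ j, ‖x j‖) * ‖x i‖ - μ * ‖x i‖ ^ 2) := by
        refine Finset.sum_congr rfl fun i _ => ?_
        simp only [sub_mul, ite_mul, zero_mul, Finset.sum_sub_distrib, Finset.sum_ite_eq,
          Finset.mem_univ, if_true, ← Finset.mul_sum]
        ring
    _ = μ * ((∑ i, ‖x i‖) ^ 2 - ∑ i, ‖x i‖ ^ 2) := by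
        rw [Finset.sum_sub_distrib, ← Finset.mul_sum, ← Finset.mul_sum, sq]
        ring

variable [DecidableEq ι]

lemma star_dotProduct_mulVec_single_add_single (A : Matrix ι ι ℂ) (i j : ι) (a b : ℂ) :
    star (Pi.single i a + Pi.single j b) ⬝ᵥ A *ᵥ (Pi.single i a + Pi.single j b) =
      conj a * A i i * a + conj a * A i j * b + conj b * A j i * a + conj b * A j j * b := by
  simp only [star_add, ← Pi.single_star, mulVec_add, dotProduct_add, add_dotProduct,
    single_dotProduct, mulVec_single]
  simp only [Pi.smul_apply, op_smul_eq_mul, col_apply, Complex.star_def]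
  ring

theorem rip_of_norm_conjTranspose_mul_self_apply_le {Φ : Matrix m ι ℂ} {μ : ℝ} (k : ℕ)
    (hunit : ∀ j, ∑ a, ‖Φ a j‖ ^ 2 = 1) (hμ : 0 ≤ μ)
    (hoff : ∀ i j, i ≠ j → ‖(Φᴴ * Φ) i j‖ ≤ μ) :
    RIP Φ k ((k - 1) * μ) := by
  intro x hx
  set T := ∑ i, ‖x i‖ ^ 2 with hT
  have hsplit :
      ∑ a, ‖(Φ *ᵥ x) a‖ ^ 2 = T + (star x ⬝ᵥ (Φᴴ * Φ - 1) *ᵥ x).re := by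
    rw [sum_norm_sq_mulVec, hT, sum_norm_sq_eq_re_star_dotProduct x, ← Complex.add_re,
      ← dotProduct_add, sub_mulVec, one_mulVec, add_sub_cancel]
  have hcross : ‖star x ⬝ᵥ (Φᴴ * Φ - 1) *ᵥ x‖ ≤ (k - 1) * μ * T := by
    have hdiag : ∀ i, (Φᴴ * Φ - 1 : Matrix ι ι ℂ) i i = 0 := fun i => by
      simp [conjTranspose_mul_self_apply_self, hunit]
    have hoff' : ∀ i j, i ≠ j → ‖(Φᴴ * Φ - 1 : Matrix ι ι ℂ) i j‖ ≤ μ :=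
      fun i j hij => by simpa [one_apply_ne hij] using hoff i j hij
    have hcard : (∑ i, ‖x i‖) ^ 2 ≤ k * T :=
      (sq_sum_norm_le_card_support_mul x).trans
        (mul_le_mul_of_nonneg_right (by exact_mod_cast hx) (by positivity))
    calc _ ≤ μ * ((∑ i, ‖x i‖) ^ 2 - T) := norm_star_dotProduct_mulVec_le hdiag hoff' x
      _ ≤ μ * (k * T - T) := by gcongr
      _ = (k - 1) * μ * T := by ring
  have hre := abs_le.1 ((Complex.abs_re_le_norm _).trans hcross)
  constructor <;> linarith

theorem norm_conjTranspose_mul_self_apply_le_of_rip {Φ : Matrix m ι ℂ} {δ : ℝ}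
    (hunit : ∀ j, ∑ a, ‖Φ a j‖ ^ 2 = 1) (hδ : RIP Φ 2 δ) {i j : ι} (hij : i ≠ j) :
    ‖(Φᴴ * Φ) i j‖ ≤ δ := by
  set z := (Φᴴ * Φ) i j
  set c := Complex.exp (↑(-z.arg) * Complex.I)
  have hnc : ‖c‖ = 1 := Complex.norm_exp_ofReal_mul_I _
  have hc : conj c * c = 1 := by
    rw [Complex.conj_mul', hnc]
    simp
  have hcz : c * z = ‖z‖ := by
    conv_lhs => rw [← Complex.norm_mul_exp_arg_mul_I z]
    rw [mul_left_comm, ← Complex.exp_add]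
    simp
  have hcz' : conj c * star z = ‖z‖ := by
    rw [Complex.star_def, ← map_mul, hcz, Complex.conj_ofReal]
  set x : ι → ℂ := Pi.single i 1 + Pi.single j c
  have hsupp : (univ.filter fun k => x k ≠ 0).card ≤ 2 := by
    refine (card_le_card (t := {i, j}) fun k hk => ?_).trans card_le_two
    by_contra hk'
    simp_all [x, Pi.single_apply]
  have hx : ∑ k, ‖x k‖ ^ 2 = 2 := by
    rw [Fintype.sum_eq_add i j hij]
    · norm_num [x, hij, hij.symm, hnc]
    · rintro k ⟨hki, hkj⟩
      simp [x, hki, hkj]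
  have hΦx : ∑ a, ‖(Φ *ᵥ x) a‖ ^ 2 = 2 + 2 * ‖z‖ := by
    have hdiag : ∀ k, (Φᴴ * Φ) k k = 1 := fun k => by
      rw [conjTranspose_mul_self_apply_self, hunit, Complex.ofReal_one]
    have hq : star x ⬝ᵥ (Φᴴ * Φ) *ᵥ x = ((2 + 2 * ‖z‖ : ℝ) : ℂ) := by
      rw [star_dotProduct_mulVec_single_add_single,
        ← (isHermitian_conjTranspose_mul_self Φ).apply j i, hdiag, hdiag, map_one]
      push_cast
      linear_combination hcz + hcz' + hc
    rw [sum_norm_sq_mulVec, hq, Complex.ofReal_re]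
  have := (hδ x hsupp).2
  rw [hx, hΦx] at this
  linarith

end

theorem coherence_eq_rip_order_two_general {n N : ℕ}
    (Φ : Matrix (Fin n) (Fin N) ℂ) (μ : ℝ)
    (hunit : ∀ j, ∑ a, ‖Φ a j‖ ^ 2 = 1)
    (hμ : IsGreatest {r : ℝ | ∃ i j : Fin N, i ≠ j ∧
      r = ‖∑ a, (starRingEnd ℂ) (Φ a i) * Φ a j‖} μ) :
    IsLeast {δ : ℝ | RIP Φ 2 δ} μ := by
  obtain ⟨⟨i, j, hij, hμij⟩, hμmax⟩ := hμ
  have hoff : ∀ i j, i ≠ j → ‖(Φᴴ * Φ) i j‖ ≤ μ := fun i j h => hμmax ⟨i, j, h, rfl⟩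
  refine ⟨?_, fun δ hδ => ?_⟩
  · have hμ0 : 0 ≤ μ := hμij ▸ norm_nonneg _
    convert rip_of_norm_conjTranspose_mul_self_apply_le 2 hunit hμ0 hoff using 1
    norm_num
  · exact hμij ▸ norm_conjTranspose_mul_self_apply_le_of_rip hunit hδ hij

/-- For a matrix with unit columns (N ≥ 2), the coherence parameter
μ = max_{i≠j} |⟨u_i,u_j⟩| is the smallest δ such that Φ satisfies the RIP of order 2
with parameter δ. -/
theorem coherence_eq_rip_order_two {n N : ℕ} (hN : 2 ≤ N)
    (Φ : Matrix (Fin n) (Fin N) ℂ) (μ : ℝ)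
    (hunit : ∀ j, ∑ a, ‖Φ a j‖ ^ 2 = 1)
    (hμ : IsGreatest {r : ℝ | ∃ i j : Fin N, i ≠ j ∧
      r = ‖∑ a, (starRingEnd ℂ) (Φ a i) * Φ a j‖} μ) :
    IsLeast {δ : ℝ | RIP Φ 2 δ} μ :=
  coherence_eq_rip_order_two_general Φ μ hunit hμ
end

section
/- Let Φ be a block-diagonal matrix with diagonal blocks A (size n₁×N₁) and B (size n₂×N₂), where N₁ ≥ k and N₂ ≥ k. Then Φ satisfies the RIP of order k with parameter δ if and only if both A and B satisfy the RIP of order k with parameter δ. -/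
/-! Φ maps `x = (x₁, x₂)` to `(A x₁, B x₂)`, so both `‖Φ x‖²` and `‖x‖²` split into the
contributions of the two blocks, and the support of `x` is the disjoint union of those of `x₁`
and `x₂`. Padding a sparse vector with zeros gives RIP for each block; conversely, adding the
RIP inequalities of the blocks gives RIP for Φ. -/

open Finset

theorem card_filter_sumElim_ne_zero {ι κ : Type*} [Fintype ι] [Fintype κ]
    (x : ι → ℂ) (y : κ → ℂ) :
    #{s | Sum.elim x y s ≠ 0} = #{i | x i ≠ 0} + #{j | y j ≠ 0} := by
  simp only [Finset.card_filter, Fintype.sum_sum_type, Sum.elim_inl, Sum.elim_inr]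
  congr

section BlockDiagonal

open Matrix

variable {m₁ m₂ N₁ N₂ : Type*} [Fintype m₁] [Fintype m₂] [Fintype N₁] [Fintype N₂]

theorem sum_norm_sq_fromBlocks_mulVec_sumElim (A : Matrix m₁ N₁ ℂ) (B : Matrix m₂ N₂ ℂ)
    (x : N₁ → ℂ) (y : N₂ → ℂ) :
    ∑ a, ‖(fromBlocks A 0 0 B *ᵥ Sum.elim x y) a‖ ^ 2 =
      ∑ a, ‖(A *ᵥ x) a‖ ^ 2 + ∑ b, ‖(B *ᵥ y) b‖ ^ 2 := by
  simp [fromBlocks_mulVec, Fintype.sum_sum_type]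

variable [DecidableEq N₁] [DecidableEq N₂] {k : ℕ} {δ : ℝ}

theorem RIP.of_fromBlocks_left {A : Matrix m₁ N₁ ℂ} {B : Matrix m₂ N₂ ℂ}
    (h : RIP (fromBlocks A 0 0 B) k δ) : RIP A k δ := by
  intro x hx
  have hsparse : #{s | Sum.elim x (0 : N₂ → ℂ) s ≠ 0} ≤ k := by
    simpa [card_filter_sumElim_ne_zero] using hx
  have hrip := h _ hsparse
  rw [sum_norm_sq_fromBlocks_mulVec_sumElim] at hrip
  simpa [Fintype.sum_sum_type] using hrip

theorem RIP.of_fromBlocks_right {A : Matrix m₁ N₁ ℂ} {B : Matrix m₂ N₂ ℂ}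
    (h : RIP (fromBlocks A 0 0 B) k δ) : RIP B k δ := by
  intro y hy
  have hsparse : #{s | Sum.elim (0 : N₁ → ℂ) y s ≠ 0} ≤ k := by
    simpa [card_filter_sumElim_ne_zero] using hy
  have hrip := h _ hsparse
  rw [sum_norm_sq_fromBlocks_mulVec_sumElim] at hrip
  simpa [Fintype.sum_sum_type] using hrip

theorem RIP.fromBlocks {A : Matrix m₁ N₁ ℂ} {B : Matrix m₂ N₂ ℂ}
    (hA : RIP A k δ) (hB : RIP B k δ) : RIP (fromBlocks A 0 0 B) k δ := by
  intro z hz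
  obtain ⟨x, y, rfl⟩ : ∃ x y, Sum.elim x y = z := ⟨_, _, Sum.elim_comp_inl_inr z⟩
  rw [card_filter_sumElim_ne_zero] at hz
  obtain ⟨hA₁, hA₂⟩ := hA x (by omega)
  obtain ⟨hB₁, hB₂⟩ := hB y (by omega)
  rw [sum_norm_sq_fromBlocks_mulVec_sumElim]
  simp only [Fintype.sum_sum_type, Sum.elim_inl, Sum.elim_inr]
  constructor <;> linarith

end BlockDiagonal

theorem rip_block_diagonal_general {n₁ n₂ N₁ N₂ k : ℕ}
    (A : Matrix (Fin n₁) (Fin N₁) ℂ) (B : Matrix (Fin n₂) (Fin N₂) ℂ) (δ : ℝ) :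
    RIP (Matrix.fromBlocks A 0 0 B) k δ ↔ RIP A k δ ∧ RIP B k δ :=
  ⟨fun h => ⟨h.of_fromBlocks_left, h.of_fromBlocks_right⟩, fun ⟨hA, hB⟩ => hA.fromBlocks hB⟩

/-- A block-diagonal matrix [[A,0],[0,B]] (each block with at least k
columns) satisfies the RIP of order k with parameter δ iff both A and B do. -/
theorem rip_block_diagonal {n₁ n₂ N₁ N₂ k : ℕ} (hN₁ : k ≤ N₁) (hN₂ : k ≤ N₂)
    (A : Matrix (Fin n₁) (Fin N₁) ℂ) (B : Matrix (Fin n₂) (Fin N₂) ℂ) (δ : ℝ) :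
    RIP (Matrix.fromBlocks A 0 0 B) k δ ↔ RIP A k δ ∧ RIP B k δ :=
  rip_block_diagonal_general A B δ
end

section
/- Let G be a graph on n vertices with signed adjacency matrix A, let c > 0, and set B = I_n + (c/√n)·A. Suppose B is positive semi-definite and C is any n×n matrix with CᵀC = B. If G has a clique of size k and δ < c(k-1)/√n, then C does not satisfy the RIP of order k with parameter δ. -/
/-! The indicator vector `x` of a `k`-clique is `k`-sparse with `‖x‖² = k`, and every entry of
the signed adjacency matrix between two clique vertices is `+1`, so
`‖Cx‖² = xᵀ B x = k + (c/√n) k (k-1)`. The upper RIP bound `‖Cx‖² ≤ (1 + δ) k` then forces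
`δ ≥ c (k-1)/√n`. -/

open Finset Matrix

/-- `Φ` satisfies the Restricted Isometry Property of order `k` with parameter `δ`
(real version). -/
def RIPR {m N : Type*} [Fintype m] [Fintype N] [DecidableEq N]
    (Φ : Matrix m N ℝ) (k : ℕ) (δ : ℝ) : Prop :=
  ∀ x : N → ℝ, (Finset.univ.filter fun i => x i ≠ 0).card ≤ k →
    (1 - δ) * ∑ i, (x i) ^ 2 ≤ ∑ a, (Φ.mulVec x a) ^ 2 ∧
      ∑ a, (Φ.mulVec x a) ^ 2 ≤ (1 + δ) * ∑ i, (x i) ^ 2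

/-- The signed adjacency matrix of a graph: zero diagonal, +1 for edges, -1 for
non-edges. -/
def signedAdj {n : ℕ} (G : SimpleGraph (Fin n)) [DecidableRel G.Adj] :
    Matrix (Fin n) (Fin n) ℝ :=
  fun i j => if i = j then 0 else if G.Adj i j then 1 else -1

section IndicatorVec

variable {V : Type*} [Fintype V] [DecidableEq V] (s : Finset V)

def indicatorVec : V → ℝ := fun i => if i ∈ s then 1 else 0

theorem indicatorVec_dotProduct (v : V → ℝ) : indicatorVec s ⬝ᵥ v = ∑ i ∈ s, v i := by
  simp [indicatorVec, dotProduct, ite_mul, Finset.sum_ite_mem]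

theorem indicatorVec_dotProduct_self : indicatorVec s ⬝ᵥ indicatorVec s = #s := by
  rw [indicatorVec_dotProduct]
  simp [indicatorVec]

theorem card_support_indicatorVec : #(univ.filter fun i => indicatorVec s i ≠ 0) = #s := by
  congr 1
  ext i
  simp [indicatorVec]

end IndicatorVec

theorem sum_sq_mulVec_eq_dotProduct_transpose_mul_mulVec {m N : Type*} [Fintype m] [Fintype N]
    (C : Matrix m N ℝ) (x : N → ℝ) : ∑ a, (C *ᵥ x) a ^ 2 = x ⬝ᵥ (Cᵀ * C) *ᵥ x := by
  rw [← mulVec_mulVec, dotProduct_mulVec, vecMul_transpose]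
  simp [dotProduct, sq]

section Clique

variable {n : ℕ} {G : SimpleGraph (Fin n)} [DecidableRel G.Adj] {s : Finset (Fin n)}

theorem signedAdj_of_isClique (hs : G.IsClique (s : Set (Fin n))) {i j : Fin n}
    (hi : i ∈ s) (hj : j ∈ s) : signedAdj G i j = 1 - if i = j then 1 else 0 := by
  by_cases h : i = j
  · simp [signedAdj, h]
  · simp [signedAdj, h, hs hi hj h]

theorem signedAdj_mulVec_indicatorVec_of_isClique (hs : G.IsClique (s : Set (Fin n)))
    {i : Fin n} (hi : i ∈ s) :
    (signedAdj G *ᵥ indicatorVec s) i = #s - 1 := by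
  rw [mulVec, dotProduct_comm, indicatorVec_dotProduct,
    sum_congr rfl fun j hj => signedAdj_of_isClique hs hi hj, sum_sub_distrib, sum_ite_eq]
  simp [hi]

theorem indicatorVec_dotProduct_signedAdj_mulVec_of_isClique
    (hs : G.IsClique (s : Set (Fin n))) :
    indicatorVec s ⬝ᵥ signedAdj G *ᵥ indicatorVec s = #s * (#s - 1) := by
  rw [indicatorVec_dotProduct,
    sum_congr rfl fun i hi => signedAdj_mulVec_indicatorVec_of_isClique hs hi]
  simp [mul_sub]

end Clique

theorem clique_breaks_rip_general {n k : ℕ} (hk : 1 ≤ k)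
    (G : SimpleGraph (Fin n)) [DecidableRel G.Adj]
    (c δ : ℝ)
    (B C : Matrix (Fin n) (Fin n) ℝ)
    (hB : B = 1 + (c / Real.sqrt n) • signedAdj G)
    (hC : Cᵀ * C = B)
    (s : Finset (Fin n)) (hs : G.IsNClique k s)
    (hδ : δ < c * ((k : ℝ) - 1) / Real.sqrt n) :
    ¬ RIPR C k δ := by
  intro hrip
  have hcard : #s = k := hs.card_eq
  have hnorm : ∑ i, indicatorVec s i ^ 2 = k := by
    simpa only [dotProduct, ← sq, hcard] using indicatorVec_dotProduct_self s
  have hCx : ∑ a, (C *ᵥ indicatorVec s) a ^ 2 = k + c / Real.sqrt n * (k * (k - 1)) := by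
    rw [sum_sq_mulVec_eq_dotProduct_transpose_mul_mulVec, hC, hB, add_mulVec, one_mulVec,
      smul_mulVec, dotProduct_add, dotProduct_smul, indicatorVec_dotProduct_self,
      indicatorVec_dotProduct_signedAdj_mulVec_of_isClique hs.isClique, hcard, smul_eq_mul]
  have hupper := (hrip (indicatorVec s) (by rw [card_support_indicatorVec, hcard])).2
  rw [hCx, hnorm] at hupper
  have hgap : c * (k - 1) / Real.sqrt n * k ≤ δ * k := by
    linarith [show c / Real.sqrt n * (k * (k - 1)) = c * (k - 1) / Real.sqrt n * k by ring]
  exact (le_of_mul_le_mul_right hgap (by exact_mod_cast hk)).not_gt hδ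

/-- If B = I + (c/√n)A is PSD, CᵀC = B, G has a k-clique and
δ < c(k-1)/√n, then C fails the RIP of order k with parameter δ. -/
theorem clique_breaks_rip {n k : ℕ} (hk : 1 ≤ k)
    (G : SimpleGraph (Fin n)) [DecidableRel G.Adj]
    (c δ : ℝ) (hc : 0 < c)
    (B C : Matrix (Fin n) (Fin n) ℝ)
    (hB : B = 1 + (c / Real.sqrt n) • signedAdj G)
    (hBpsd : B.PosSemidef) (hC : Cᵀ * C = B)
    (s : Finset (Fin n)) (hs : G.IsNClique k s)
    (hδ : δ < c * ((k : ℝ) - 1) / Real.sqrt n) :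
    ¬ RIPR C k δ :=
  clique_breaks_rip_general hk G c δ B C hB hC s hs hδ
end

section
/- Let T be a set of size k, let m ≤ k, and for i,j ∈ T with i < j let w_{ij} be real numbers. If for every subset S ⊆ T with |S| = m we have |Σ_{i<j, i,j∈S} x_i x_j w_{ij}| ≤ (ε/2)·Σ_{i∈S} x_i², then |Σ_{i<j, i,j∈T} x_i x_j w_{ij}| ≤ (ε/2)·((k-1)/(m-1))·Σ_{i∈T} x_i², for any real numbers (x_i)_{i∈T}. (Each pair {i,j} lies in exactly C(k-2,m-2) subsets S of size m, and each index i in exactly C(k-1,m-1) such subsets.) -/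
open Finset

lemma count_aux {ι : Type*} [DecidableEq ι] (T A : Finset ι) (hA : A ⊆ T) {m : ℕ}
    (hm : A.card ≤ m) :
    ((powersetCard m T).filter (fun S => A ⊆ S)).card
      = (T.card - A.card).choose (m - A.card) := by
  rw [← Finset.card_sdiff_of_subset hA, ← card_powersetCard (m - A.card) (T \ A)]
  apply card_bij (fun S _ => S \ A)
  · intro S hS
    simp only [mem_filter, mem_powersetCard] at hS
    rw [mem_powersetCard]
    exact ⟨sdiff_subset_sdiff hS.1.1 Subset.rfl, by rw [card_sdiff_of_subset hS.2, hS.1.2]⟩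
  · intro S₁ h1 S₂ h2 he
    simp only [mem_filter] at h1 h2
    rw [← sdiff_union_of_subset h1.2, ← sdiff_union_of_subset h2.2, he]
  · intro B hB
    rw [mem_powersetCard] at hB
    have hdisj : Disjoint B A := (subset_sdiff.mp hB.1).2
    refine ⟨B ∪ A, ?_, ?_⟩
    · simp only [mem_filter, mem_powersetCard]
      refine ⟨⟨union_subset (subset_sdiff.mp hB.1).1 hA, ?_⟩, subset_union_right⟩
      rw [card_union_of_disjoint hdisj, hB.2, Nat.sub_add_cancel hm]
    · rw [union_sdiff_right, Finset.sdiff_eq_self_iff_disjoint.mpr hdisj]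

lemma sum_ind_subset {ι : Type*} [DecidableEq ι] {S T : Finset ι} (hST : S ⊆ T)
    (f : ι → ℝ) : ∑ i ∈ S, f i = ∑ i ∈ T, if i ∈ S then f i else 0 := by
  rw [sum_ite_mem, inter_eq_right.mpr hST]

lemma sum_mem_count {ι : Type*} [DecidableEq ι] (T : Finset ι) (m : ℕ) (hm : 1 ≤ m)
    (f : ι → ℝ) :
    ∑ S ∈ powersetCard m T, ∑ i ∈ S, f i
      = ((T.card - 1).choose (m - 1) : ℝ) * ∑ i ∈ T, f i := by
  have h1 : ∀ S ∈ powersetCard m T, ∑ i ∈ S, f i = ∑ i ∈ T, if i ∈ S then f i else 0 :=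
    fun S hS => sum_ind_subset (mem_powersetCard.mp hS).1 f
  rw [sum_congr rfl h1, sum_comm, mul_sum]
  refine sum_congr rfl fun i hi => ?_
  rw [← sum_filter, sum_const, nsmul_eq_mul]
  congr 1
  have : ∀ S : Finset ι, (i ∈ S) = ({i} ⊆ S) := fun S => by simp
  simp only [this]
  rw [count_aux T {i} (by simpa using hi) (by simpa using hm), card_singleton]

lemma sum_pair_count {ι : Type*} [DecidableEq ι] [LinearOrder ι] (T : Finset ι) (m : ℕ)
    (hm : 2 ≤ m) (g : ι → ι → ℝ) :
    ∑ S ∈ powersetCard m T, ∑ i ∈ S, ∑ j ∈ S.filter (fun j => i < j), g i j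
      = ((T.card - 2).choose (m - 2) : ℝ)
          * ∑ i ∈ T, ∑ j ∈ T.filter (fun j => i < j), g i j := by
  have h1 : ∀ S ∈ powersetCard m T,
      ∑ i ∈ S, ∑ j ∈ S.filter (fun j => i < j), g i j
        = ∑ i ∈ T, ∑ j ∈ T.filter (fun j => i < j),
            if i ∈ S ∧ j ∈ S then g i j else 0 := by
    intro S hS
    have hST := (mem_powersetCard.mp hS).1
    have h2 : ∀ i : ι, ∑ j ∈ S.filter (fun j => i < j), g i j
        = ∑ j ∈ T.filter (fun j => i < j), if j ∈ S then g i j else 0 := by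
      intro i
      rw [sum_ind_subset (filter_subset_filter (fun j => i < j) hST) (g i)]
      refine sum_congr rfl fun j hj => ?_
      simp [mem_filter, (mem_filter.mp hj).2]
    simp only [h2]
    rw [sum_ind_subset hST]
    refine sum_congr rfl fun i _ => ?_
    simp only [ite_and]
    split <;> simp
  rw [sum_congr rfl h1, sum_comm, mul_sum]
  refine sum_congr rfl fun i hi => ?_
  rw [sum_comm, mul_sum]
  refine sum_congr rfl fun j hj => ?_
  rw [← sum_filter, sum_const, nsmul_eq_mul]
  congr 1
  have hij : i < j := (mem_filter.mp hj).2
  have hmemT : j ∈ T := (mem_filter.mp hj).1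
  have hpred : ∀ S : Finset ι, (i ∈ S ∧ j ∈ S) = ({i, j} ⊆ S) := fun S => by
    simp [insert_subset_iff]
  simp only [hpred]
  have hcard : ({i, j} : Finset ι).card = 2 := card_pair hij.ne
  rw [count_aux T {i, j} (by simp [insert_subset_iff, hi, hmemT]) (by rw [hcard]; exact hm),
    hcard]

/-- Double-counting core of the order-increase theorem: if the pairwise
sums over every subset S ⊆ T of size m are bounded by (ε/2)·∑_{i∈S} x_i², then the
pairwise sum over T (with |T| = k) is bounded by (ε/2)·((k-1)/(m-1))·∑_{i∈T} x_i². -/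
theorem pair_sum_double_counting {ι : Type*} [DecidableEq ι] [LinearOrder ι]
    (T : Finset ι) (k m : ℕ) (hT : T.card = k) (hm2 : 2 ≤ m) (hmk : m ≤ k)
    (w : ι → ι → ℝ) (ε : ℝ) (x : ι → ℝ)
    (h : ∀ S ⊆ T, S.card = m →
      |∑ i ∈ S, ∑ j ∈ S.filter (fun j => i < j), x i * x j * w i j|
        ≤ ε / 2 * ∑ i ∈ S, x i ^ 2) :
    |∑ i ∈ T, ∑ j ∈ T.filter (fun j => i < j), x i * x j * w i j|
      ≤ ε / 2 * (((k : ℝ) - 1) / ((m : ℝ) - 1)) * ∑ i ∈ T, x i ^ 2 := by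
  have hk2 : 2 ≤ k := le_trans hm2 hmk
  set P := ∑ i ∈ T, ∑ j ∈ T.filter (fun j => i < j), x i * x j * w i j with hP
  set Q := ∑ i ∈ T, x i ^ 2 with hQ
  have hC2pos : 0 < (k - 2).choose (m - 2) :=
    Nat.choose_pos (Nat.sub_le_sub_right hmk 2)
  have key : ((k - 2).choose (m - 2) : ℝ) * |P|
      ≤ ε / 2 * ((k - 1).choose (m - 1) : ℝ) * Q := by
    have h1 : ((k - 2).choose (m - 2) : ℝ) * P
        = ∑ S ∈ powersetCard m T, ∑ i ∈ S, ∑ j ∈ S.filter (fun j => i < j),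
            x i * x j * w i j := by
      rw [sum_pair_count T m hm2, hT]
    have h2 : |∑ S ∈ powersetCard m T, ∑ i ∈ S, ∑ j ∈ S.filter (fun j => i < j),
        x i * x j * w i j| ≤ ∑ S ∈ powersetCard m T, ε / 2 * ∑ i ∈ S, x i ^ 2 := by
      refine (abs_sum_le_sum_abs _ _).trans (sum_le_sum fun S hS => ?_)
      have hSm := mem_powersetCard.mp hS
      exact h S hSm.1 hSm.2
    have h3 : ∑ S ∈ powersetCard m T, ε / 2 * ∑ i ∈ S, x i ^ 2
        = ε / 2 * ((k - 1).choose (m - 1) : ℝ) * Q := by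
      rw [← mul_sum, sum_mem_count T m (le_trans one_le_two hm2) _, hT]
      ring
    calc ((k - 2).choose (m - 2) : ℝ) * |P| = |((k - 2).choose (m - 2) : ℝ) * P| := by
          rw [abs_mul, Nat.abs_cast]
      _ ≤ _ := by rw [h1]; exact h2.trans h3.le
  -- relate the binomials
  have hchoose : ((k - 1).choose (m - 1) : ℝ)
      = ((k : ℝ) - 1) / ((m : ℝ) - 1) * ((k - 2).choose (m - 2) : ℝ) := by
    have hnat : (k - 1) * (k - 2).choose (m - 2) = (k - 1).choose (m - 1) * (m - 1) := by
      have := Nat.add_one_mul_choose_eq (k - 2) (m - 2)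
      have e1 : k - 2 + 1 = k - 1 := by omega
      have e2 : m - 2 + 1 = m - 1 := by omega
      rw [e1, e2] at this
      simpa [Nat.succ_eq_add_one, e1, e2] using this
    have hm1 : (0 : ℝ) < (m : ℝ) - 1 := by
      have : (1 : ℝ) < m := by exact_mod_cast lt_of_lt_of_le one_lt_two hm2
      linarith
    have hcast : ((k : ℝ) - 1) * ((k - 2).choose (m - 2) : ℝ)
        = ((k - 1).choose (m - 1) : ℝ) * ((m : ℝ) - 1) := by
      have hk1 : ((k - 1 : ℕ) : ℝ) = (k : ℝ) - 1 := by
        rw [Nat.cast_sub (by omega)]; norm_num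
      have hm1' : ((m - 1 : ℕ) : ℝ) = (m : ℝ) - 1 := by
        rw [Nat.cast_sub (by omega)]; norm_num
      rw [← hk1, ← hm1']
      exact_mod_cast hnat
    field_simp
    linarith [hcast]
  have hC2pos' : (0 : ℝ) < ((k - 2).choose (m - 2) : ℝ) := by exact_mod_cast hC2pos
  rw [hchoose] at key
  have : |P| ≤ ε / 2 * (((k : ℝ) - 1) / ((m : ℝ) - 1)) * Q := by
    have := key
    nlinarith [hC2pos', abs_nonneg P]
  exact this
end
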